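/- Let ω ∈ ℝ with ω > 0 and sin ω ≠ 0, and suppose φ₁, φ₂ : V → ℂ are both vertex eigenfunctions of frequency ω. For each oriented edge e and j = 1,2 set A_{e,j} = φ_j(e₀) and B_{e,j} = (φ_j(e₁) − φ_j(e₀)·cos ω)/sin ω, and let y_{e,j}(x) = A_{e,j}·cos(ωx) + B_{e,j}·sin(ωx). Then Σ_{e ∈ E} ∫₀¹ y_{e,1}(x)·conj(y_{e,2}(x)) dx = (1/2)·Σ_{e ∈ E} (A_{e,1}·conj(A_{e,2}) + B_{e,1}·conj(B_{e,2})). -/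

import Mathlib

open scoped BigOperators

/-! On each edge, `∫₀¹ y₁ ȳ₂` is half the product of the coefficients plus the boundary term
`(a₁ b̄₀ + a₀ b̄₁ - cos ω (a₀ b̄₀ + a₁ b̄₁)) / (2 ω sin ω)`, where `aᵢ = φ₁(eᵢ)`, `bᵢ = φ₂(eᵢ)`.
This term is symmetric in the two endpoints, so twice its sum over the edges is a sum over
darts, i.e. over vertices `u` and their neighbours `v`. There the eigenfunction equations for
`φ₁` and `φ̄₂` turn the mixed terms into `2 cos ω Σᵤ deg u · φ₁(u) φ̄₂(u)`, which the diagonal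
terms `cos ω Σᵤ Σᵥ (φ₁(u) φ̄₂(u) + φ₁(v) φ̄₂(v))` cancel exactly. -/

open Finset ComplexConjugate

section

open Real

theorem integral_cos_mul_sq {ω : ℝ} (hω : ω ≠ 0) (b : ℝ) :
    ∫ x in (0 : ℝ)..b, cos (ω * x) ^ 2 = b / 2 + sin (ω * b) * cos (ω * b) / (2 * ω) := by
  rw [intervalIntegral.integral_comp_mul_left (fun y => cos y ^ 2) hω, integral_cos_sq]
  simp only [mul_zero, sin_zero, cos_zero, smul_eq_mul]
  field_simp
  ring

theorem integral_sin_mul_sq {ω : ℝ} (hω : ω ≠ 0) (b : ℝ) :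
    ∫ x in (0 : ℝ)..b, sin (ω * x) ^ 2 = b / 2 - sin (ω * b) * cos (ω * b) / (2 * ω) := by
  rw [intervalIntegral.integral_comp_mul_left (fun y => sin y ^ 2) hω, integral_sin_sq]
  simp only [mul_zero, sin_zero, cos_zero, smul_eq_mul]
  field_simp
  ring

theorem integral_cos_mul_mul_sin_mul {ω : ℝ} (hω : ω ≠ 0) (b : ℝ) :
    ∫ x in (0 : ℝ)..b, cos (ω * x) * sin (ω * x) = sin (ω * b) ^ 2 / (2 * ω) := by
  simp_rw [mul_comm (cos _)]
  rw [intervalIntegral.integral_comp_mul_left (fun y => sin y * cos y) hω, integral_sin_mul_cos₁]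
  simp only [mul_zero, sin_zero, smul_eq_mul, zero_pow two_ne_zero, sub_zero]
  field_simp

theorem integral_cos_sin_mul_conj {ω : ℝ} (hω : ω ≠ 0) (A₁ B₁ A₂ B₂ : ℂ) :
    ∫ x in (0 : ℝ)..1, (A₁ * cos (ω * x) + B₁ * sin (ω * x))
        * conj (A₂ * cos (ω * x) + B₂ * sin (ω * x))
      = (A₁ * conj A₂ + B₁ * conj B₂) / 2
        + (sin ω * cos ω * (A₁ * conj A₂ - B₁ * conj B₂)
          + sin ω ^ 2 * (A₁ * conj B₂ + B₁ * conj A₂)) / (2 * ω) := by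
  have expand : ∀ x : ℝ, (A₁ * cos (ω * x) + B₁ * sin (ω * x))
        * conj (A₂ * cos (ω * x) + B₂ * sin (ω * x))
      = A₁ * conj A₂ * ((cos (ω * x) ^ 2 : ℝ) : ℂ)
        + (A₁ * conj B₂ + B₁ * conj A₂) * ((cos (ω * x) * sin (ω * x) : ℝ) : ℂ)
        + B₁ * conj B₂ * ((sin (ω * x) ^ 2 : ℝ) : ℂ) := fun x => by
    simp only [map_add, map_mul, Complex.conj_ofReal]
    push_cast
    ring
  have hω' : (ω : ℂ) ≠ 0 := Complex.ofReal_ne_zero.2 hω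
  simp_rw [expand]
  rw [intervalIntegral.integral_add, intervalIntegral.integral_add]
  · simp only [intervalIntegral.integral_const_mul, intervalIntegral.integral_ofReal,
      integral_cos_mul_sq hω, integral_sin_mul_sq hω, integral_cos_mul_mul_sin_mul hω, mul_one]
    push_cast
    field_simp
    ring
  all_goals exact (Continuous.intervalIntegrable (by fun_prop) _ _)

theorem integral_interpolant_mul_conj {ω : ℝ} (hs : sin ω ≠ 0) (a₀ a₁ b₀ b₁ : ℂ) :
    ∫ x in (0 : ℝ)..1, (a₀ * cos (ω * x) + (a₁ - a₀ * cos ω) / sin ω * sin (ω * x))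
        * conj (b₀ * cos (ω * x) + (b₁ - b₀ * cos ω) / sin ω * sin (ω * x))
      = (a₀ * conj b₀ + (a₁ - a₀ * cos ω) / sin ω * conj ((b₁ - b₀ * cos ω) / sin ω)) / 2
        + (a₁ * conj b₀ + a₀ * conj b₁ - cos ω * (a₀ * conj b₀ + a₁ * conj b₁))
          / (2 * ω * sin ω) := by
  have hω : ω ≠ 0 := by rintro rfl; exact hs sin_zero
  have hω' : (ω : ℂ) ≠ 0 := Complex.ofReal_ne_zero.2 hω
  have hs' : (sin ω : ℂ) ≠ 0 := Complex.ofReal_ne_zero.2 hs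
  have pythagoras : (sin ω : ℂ) ^ 2 + (cos ω : ℂ) ^ 2 = 1 := by exact_mod_cast sin_sq_add_cos_sq ω
  rw [integral_cos_sin_mul_conj hω, add_right_inj]
  simp only [map_div₀, map_sub, map_mul, Complex.conj_ofReal]
  field_simp
  linear_combination (a₀ * conj b₁ + a₁ * conj b₀ - cos ω * a₀ * conj b₀) * pythagoras

end

namespace SimpleGraph

variable {V : Type*} [Fintype V] (G : SimpleGraph V) [DecidableRel G.Adj]

section DartSums

variable {M : Type*} [AddCommMonoid M]

theorem sum_darts_eq_sum_sum_neighborFinset (f : V → V → M) :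
    ∑ d : G.Dart, f d.fst d.snd = ∑ u, ∑ v ∈ G.neighborFinset u, f u v := by
  have := Classical.decEq V
  rw [← sum_fiberwise (s := univ) (g := fun d : G.Dart => d.fst)]
  refine sum_congr rfl fun u _ => ?_
  rw [dart_fst_fiber, sum_image fun _ _ _ _ h => G.dartOfNeighborSet_injective u h]
  exact (sum_subtype _ (by simp) (f u)).symm

theorem sum_sum_neighborFinset_apply_snd (f : V → M) :
    ∑ u, ∑ v ∈ G.neighborFinset u, f v = ∑ v, G.degree v • f v := by
  rw [← G.sum_darts_eq_sum_sum_neighborFinset fun _ v => f v,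
    ← Fintype.sum_equiv (Dart.symm_involutive.toPerm _) (fun d => f d.fst) _ fun _ => rfl,
    G.sum_darts_eq_sum_sum_neighborFinset fun u _ => f u]
  simp only [sum_const, card_neighborFinset_eq_degree]

theorem sum_darts_edge_eq_two_nsmul_sum_edgeFinset [DecidableEq V] (h : Sym2 V → M) :
    ∑ d : G.Dart, h d.edge = 2 • ∑ z ∈ G.edgeFinset, h z := by
  rw [← sum_fiberwise_of_maps_to (t := G.edgeFinset) (g := Dart.edge) (by simp),
    smul_sum]
  refine sum_congr rfl fun z hz => ?_
  rw [sum_congr rfl fun d hd => congrArg h (mem_filter.1 hd).2, sum_const,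
    G.dart_edge_fiber_card z (mem_edgeFinset.1 hz)]

theorem sum_edges_eq_sum_edgeFinset [DecidableEq V] {E : Type*} [Fintype E] {e₀ e₁ : E → V}
    (hadj : ∀ e, G.Adj (e₀ e) (e₁ e))
    (hinj : ∀ e e', s(e₀ e, e₁ e) = s(e₀ e', e₁ e') → e = e')
    (hsurj : ∀ z ∈ G.edgeSet, ∃ e, s(e₀ e, e₁ e) = z) (h : Sym2 V → M) :
    ∑ e, h s(e₀ e, e₁ e) = ∑ z ∈ G.edgeFinset, h z :=
  sum_nbij (fun e => s(e₀ e, e₁ e)) (fun e _ => by simpa using hadj e)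
    (fun e _ e' _ => hinj e e') (fun z hz => by simpa using hsurj z (by simpa using hz))
    fun _ _ => rfl

theorem two_nsmul_sum_edges_eq_sum_sum_neighborFinset {E : Type*} [Fintype E] {e₀ e₁ : E → V}
    (hadj : ∀ e, G.Adj (e₀ e) (e₁ e))
    (hinj : ∀ e e', s(e₀ e, e₁ e) = s(e₀ e', e₁ e') → e = e')
    (hsurj : ∀ z ∈ G.edgeSet, ∃ e, s(e₀ e, e₁ e) = z) (g : V → V → M)
    (hg : ∀ u v, g u v = g v u) :
    2 • ∑ e, g (e₀ e) (e₁ e) = ∑ u, ∑ v ∈ G.neighborFinset u, g u v := by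
  classical
  let h : Sym2 V → M := Sym2.lift ⟨g, hg⟩
  calc 2 • ∑ e, g (e₀ e) (e₁ e) = 2 • ∑ e, h s(e₀ e, e₁ e) := rfl
    _ = ∑ d : G.Dart, h d.edge := by
      rw [G.sum_edges_eq_sum_edgeFinset hadj hinj hsurj,
        G.sum_darts_edge_eq_two_nsmul_sum_edgeFinset]
    _ = ∑ u, ∑ v ∈ G.neighborFinset u, g u v := G.sum_darts_eq_sum_sum_neighborFinset g

end DartSums

/-- A vertex eigenfunction of frequency `ω` in the paper is `IsVertexEigenfunction G (cos ω)`. -/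
def IsVertexEigenfunction {R : Type*} [Semiring R] (c : R) (φ : V → R) : Prop :=
  ∀ v, ∑ w ∈ G.neighborFinset v, φ w = c * G.degree v * φ v

variable {G}

theorem IsVertexEigenfunction.conj {R : Type*} [CommSemiring R] [StarRing R] {c : R}
    (hc : conj c = c) {φ : V → R} (hφ : G.IsVertexEigenfunction c φ) :
    G.IsVertexEigenfunction c fun v => conj (φ v) := fun v => by
  rw [← map_sum, hφ v, map_mul, map_mul, hc, map_natCast]

theorem IsVertexEigenfunction.sum_sum_neighborFinset_eq_zero {R : Type*} [CommRing R] {c : R}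
    {φ ψ : V → R} (hφ : G.IsVertexEigenfunction c φ) (hψ : G.IsVertexEigenfunction c ψ) :
    ∑ u, ∑ v ∈ G.neighborFinset u, (φ v * ψ u + φ u * ψ v - c * (φ u * ψ u + φ v * ψ v)) = 0 := by
  have inner : ∀ u, ∑ v ∈ G.neighborFinset u,
      (φ v * ψ u + φ u * ψ v - c * (φ u * ψ u + φ v * ψ v))
        = c * (G.degree u • (φ u * ψ u)) - c * ∑ v ∈ G.neighborFinset u, φ v * ψ v := by
    intro u
    rw [sum_sub_distrib, sum_add_distrib, ← sum_mul, hφ u, ← mul_sum,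
      hψ u, ← mul_sum, sum_add_distrib, sum_const,
      card_neighborFinset_eq_degree, nsmul_eq_mul]
    ring
  rw [sum_congr rfl fun u _ => inner u, sum_sub_distrib, ← mul_sum,
    ← mul_sum, sum_sum_neighborFinset_apply_snd, sub_self]

theorem IsVertexEigenfunction.sum_edges_eq_zero {R : Type*} [CommRing R] [IsAddTorsionFree R]
    {E : Type*} [Fintype E] {e₀ e₁ : E → V}
    (hadj : ∀ e, G.Adj (e₀ e) (e₁ e))
    (hinj : ∀ e e', s(e₀ e, e₁ e) = s(e₀ e', e₁ e') → e = e')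
    (hsurj : ∀ z ∈ G.edgeSet, ∃ e, s(e₀ e, e₁ e) = z) {c : R}
    {φ ψ : V → R} (hφ : G.IsVertexEigenfunction c φ) (hψ : G.IsVertexEigenfunction c ψ) :
    ∑ e, (φ (e₁ e) * ψ (e₀ e) + φ (e₀ e) * ψ (e₁ e)
      - c * (φ (e₀ e) * ψ (e₀ e) + φ (e₁ e) * ψ (e₁ e))) = 0 := by
  rw [← two_nsmul_eq_zero, G.two_nsmul_sum_edges_eq_sum_sum_neighborFinset hadj hinj hsurj
    (fun u v => φ v * ψ u + φ u * ψ v - c * (φ u * ψ u + φ v * ψ v)) fun u v => by ring]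
  exact hφ.sum_sum_neighborFinset_eq_zero hψ

end SimpleGraph

open SimpleGraph

theorem qgfft_inprod2_general
    {V : Type*} [Fintype V]
    (G : SimpleGraph V) [DecidableRel G.Adj]
    {E : Type*} [Fintype E] (e₀ e₁ : E → V)
    (hadj : ∀ e : E, G.Adj (e₀ e) (e₁ e))
    (hinj : ∀ e e' : E, s(e₀ e, e₁ e) = s(e₀ e', e₁ e') → e = e')
    (hsurj : ∀ x ∈ G.edgeSet, ∃ e : E, s(e₀ e, e₁ e) = x)
    (ω : ℝ) (hω : Real.sin ω ≠ 0)
    (φ₁ φ₂ : V → ℂ)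
    (hφ₁ : ∀ v : V, ∑ w ∈ G.neighborFinset v, φ₁ w
      = (Real.cos ω : ℂ) * (G.degree v : ℂ) * φ₁ v)
    (hφ₂ : ∀ v : V, ∑ w ∈ G.neighborFinset v, φ₂ w
      = (Real.cos ω : ℂ) * (G.degree v : ℂ) * φ₂ v) :
    ∑ e : E, ∫ x in (0:ℝ)..1,
        (φ₁ (e₀ e) * (Real.cos (ω * x) : ℂ)
          + ((φ₁ (e₁ e) - φ₁ (e₀ e) * (Real.cos ω : ℂ)) / (Real.sin ω : ℂ))
            * (Real.sin (ω * x) : ℂ))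
        * (starRingEnd ℂ)
          (φ₂ (e₀ e) * (Real.cos (ω * x) : ℂ)
            + ((φ₂ (e₁ e) - φ₂ (e₀ e) * (Real.cos ω : ℂ)) / (Real.sin ω : ℂ))
              * (Real.sin (ω * x) : ℂ))
    = (1 / 2 : ℂ) * ∑ e : E,
        (φ₁ (e₀ e) * (starRingEnd ℂ) (φ₂ (e₀ e))
          + ((φ₁ (e₁ e) - φ₁ (e₀ e) * (Real.cos ω : ℂ)) / (Real.sin ω : ℂ))
            * (starRingEnd ℂ)
              ((φ₂ (e₁ e) - φ₂ (e₀ e) * (Real.cos ω : ℂ)) / (Real.sin ω : ℂ))) := by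
  have hφ₂conj : G.IsVertexEigenfunction (Real.cos ω : ℂ) fun v => conj (φ₂ v) :=
    IsVertexEigenfunction.conj (Complex.conj_ofReal _) hφ₂
  simp only [integral_interpolant_mul_conj hω]
  rw [sum_add_distrib, ← sum_div, ← sum_div,
    IsVertexEigenfunction.sum_edges_eq_zero hadj hinj hsurj hφ₁ hφ₂conj,
    zero_div, add_zero, one_div_mul_eq_div]

/-- Theorem `inprod2` for eigenfunctions built from vertex data:
the `L²(𝒢)` inner product of the two edgewise eigenfunctions equals half the sum of the
products of their coefficients. -/
theorem qgfft_inprod2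
    {V : Type*} [Fintype V] [DecidableEq V]
    (G : SimpleGraph V) [DecidableRel G.Adj]
    (hdeg : ∀ v : V, 0 < G.degree v)
    {E : Type*} [Fintype E] (e₀ e₁ : E → V)
    (hadj : ∀ e : E, G.Adj (e₀ e) (e₁ e))
    (hinj : ∀ e e' : E, s(e₀ e, e₁ e) = s(e₀ e', e₁ e') → e = e')
    (hsurj : ∀ x ∈ G.edgeSet, ∃ e : E, s(e₀ e, e₁ e) = x)
    (ω : ℝ) (hωpos : 0 < ω) (hω : Real.sin ω ≠ 0)
    (φ₁ φ₂ : V → ℂ)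
    (hφ₁ : ∀ v : V, ∑ w ∈ G.neighborFinset v, φ₁ w
      = (Real.cos ω : ℂ) * (G.degree v : ℂ) * φ₁ v)
    (hφ₂ : ∀ v : V, ∑ w ∈ G.neighborFinset v, φ₂ w
      = (Real.cos ω : ℂ) * (G.degree v : ℂ) * φ₂ v) :
    ∑ e : E, ∫ x in (0:ℝ)..1,
        (φ₁ (e₀ e) * (Real.cos (ω * x) : ℂ)
          + ((φ₁ (e₁ e) - φ₁ (e₀ e) * (Real.cos ω : ℂ)) / (Real.sin ω : ℂ))
            * (Real.sin (ω * x) : ℂ))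
        * (starRingEnd ℂ)
          (φ₂ (e₀ e) * (Real.cos (ω * x) : ℂ)
            + ((φ₂ (e₁ e) - φ₂ (e₀ e) * (Real.cos ω : ℂ)) / (Real.sin ω : ℂ))
              * (Real.sin (ω * x) : ℂ))
    = (1 / 2 : ℂ) * ∑ e : E,
        (φ₁ (e₀ e) * (starRingEnd ℂ) (φ₂ (e₀ e))
          + ((φ₁ (e₁ e) - φ₁ (e₀ e) * (Real.cos ω : ℂ)) / (Real.sin ω : ℂ))
            * (starRingEnd ℂ)
              ((φ₂ (e₁ e) - φ₂ (e₀ e) * (Real.cos ω : ℂ)) / (Real.sin ω : ℂ))) :=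
  qgfft_inprod2_general G e₀ e₁ hadj hinj hsurj ω hω φ₁ φ₂ hφ₁ hφ₂
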